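/- arXiv:2006.09171 — 7 statements merged into one kernel-verified Lean document; each statement's English description precedes it below -/
import Mathlib

section
/- Let I be a finite nonempty type, ι a finite type indexing the random variables, O a finite type indexing the observable variables, ρ : O ↪ ι an injection, and f : O → (ι → I) → I a family of computations. Assume that for every j : O: (i) for every j' : O with j' ≠ j, f j does not depend on coordinate ρ j', i.e. f j (Function.update v (ρ j') x) = f j v for all v : ι → I and x : I; and (ii) f j is invertible at coordinate ρ j, i.e. for every v : ι → I the map x ↦ f j (Function.update v (ρ j) x) : I → I is bijective. Then PMF.map (fun v => fun j : O => f j v) (PMF.uniformOfFintype (ι → I)) = PMF.uniformOfFintype (O → I). -/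
/-!
Pair the outputs `f j v` with the random inputs lying outside the range of `ρ`. By the first
hypothesis `f j` only sees `v (ρ j)` and these free inputs, and by the second it is injective in
`v (ρ j)`, so the pairing is injective, hence bijective by counting. Every fiber of the output map
therefore has the same size `|I| ^ |(range ρ)ᶜ|`, and the image of the uniform distribution is
uniform.
-/

open scoped ENNReal

theorem PMF.map_uniformOfFintype_of_card_fiber {α β : Type*} [Fintype α] [Nonempty α]
    [Fintype β] [Nonempty β] [DecidableEq β] (g : α → β) (k : ℕ)
    (hk : ∀ b, Fintype.card {a // g a = b} = k) :
    PMF.map g (PMF.uniformOfFintype α) = PMF.uniformOfFintype β := by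
  have hα : Fintype.card α = Fintype.card β * k := by
    rw [Fintype.card_congr (Equiv.sigmaFiberEquiv g).symm, Fintype.card_sigma]
    simp [hk]
  have hk0 : (k : ℝ≥0∞) ≠ 0 := by
    have := Fintype.card_pos (α := α)
    rw [hα] at this
    exact_mod_cast (Nat.pos_of_mul_pos_left this).ne'
  ext b
  simp only [PMF.map_apply, PMF.uniformOfFintype_apply, tsum_fintype, Finset.sum_ite,
    Finset.sum_const, nsmul_eq_mul, mul_zero, add_zero]
  rw [← Fintype.card_subtype]
  simp_rw [eq_comm (a := b), hk, hα]
  push_cast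
  rw [ENNReal.mul_inv (Or.inr (ENNReal.natCast_ne_top k)) (Or.inr hk0), mul_left_comm,
    ENNReal.mul_inv_cancel hk0 (ENNReal.natCast_ne_top k), mul_one]

theorem Fintype.card_fiber_fst_of_bijective {α β γ : Type*} [Fintype α] [Fintype β]
    [Fintype γ] [DecidableEq β] {e : α → β × γ} (he : Function.Bijective e) (b : β) :
    Fintype.card {a // (e a).1 = b} = Fintype.card γ := by
  rw [Fintype.card_congr (((Equiv.ofBijective e he).subtypeEquiv (p := fun a => (e a).1 = b)
    (q := fun p => p.1 = b) fun _ => Iff.rfl).trans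
    (Equiv.prodSubtypeFstEquivSubtypeProd (p := fun x => x = b))),
    Fintype.card_prod, Fintype.card_unique, one_mul]

theorem dependsOn_of_update_eq {ι β : Type*} {α : ι → Type*} [DecidableEq ι] [Finite ι]
    {g : (Π i, α i) → β} {s : Set ι}
    (hg : ∀ i ∉ s, ∀ v x, g (Function.update v i x) = g v) : DependsOn g s := by
  classical
  have := Fintype.ofFinite ι
  intro v v' hvv'
  have hpiecewise : ∀ t : Finset ι, (∀ i ∈ t, i ∉ s) → g (t.piecewise v' v) = g v := by
    intro t
    induction t using Finset.induction_on with
    | empty => simp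
    | insert a t _ ih =>
      intro ht
      rw [Finset.piecewise_insert, hg a (ht a (Finset.mem_insert_self a t)),
        ih fun i hi => ht i (Finset.mem_insert_of_mem hi)]
  have hfill : (Finset.univ.filter (· ∉ s)).piecewise v' v = v' := by
    ext i
    by_cases hi : i ∈ s
    · rw [Finset.piecewise_eq_of_notMem _ _ _ (by simp [hi]), hvv' i hi]
    · exact Finset.piecewise_eq_of_mem _ _ _ (by simp [hi])
  rw [← hfill, hpiecewise _ fun i hi => (Finset.mem_filter.mp hi).2]

section

variable {I ι O : Type*} (ρ : O ↪ ι) (f : O → (ι → I) → I)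

def outputsAndFreeInputs (v : ι → I) : (O → I) × (↥(Set.range ρ)ᶜ → I) :=
  (fun j => f j v, fun i => v i)

variable [DecidableEq ι]

theorem dependsOn_insert_compl_range [Finite ι]
    (h : ∀ j j' : O, j' ≠ j → ∀ (v : ι → I) (x : I),
      f j (Function.update v (ρ j') x) = f j v)
    (j : O) : DependsOn (f j) (insert (ρ j) (Set.range ρ)ᶜ) := by
  refine dependsOn_of_update_eq fun i hi => ?_
  obtain ⟨hij, j', rfl⟩ : i ≠ ρ j ∧ i ∈ Set.range ρ := by simpa using hi
  exact h j j' fun hj => hij (hj ▸ rfl)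

theorem outputsAndFreeInputs_injective
    (hdep : ∀ j, DependsOn (f j) (insert (ρ j) (Set.range ρ)ᶜ))
    (hinj : ∀ j v, Function.Injective fun x : I => f j (Function.update v (ρ j) x)) :
    Function.Injective (outputsAndFreeInputs ρ f) := by
  intro v v' h
  simp only [outputsAndFreeInputs, Prod.ext_iff, funext_iff, Subtype.forall,
    Set.mem_compl_iff] at h
  obtain ⟨hout, hfree⟩ := h
  have hdom : ∀ j, v (ρ j) = v' (ρ j) := fun j => hinj j v' <| by
    simp only [Function.update_eq_self, ← hout j]
    refine hdep j fun i hi => ?_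
    rcases hi with rfl | hi
    · simp
    · rw [Function.update_of_ne fun h => hi ⟨j, h.symm⟩, hfree i hi]
  funext i
  by_cases hi : i ∈ Set.range ρ
  · obtain ⟨j, rfl⟩ := hi
    exact hdom j
  · exact hfree i hi

theorem card_fun_eq_card_fun_prod_compl_range [Fintype I] [Fintype ι] [DecidableEq O]
    [Fintype O] [DecidablePred (· ∈ Set.range ρ)] :
    Fintype.card (ι → I) = Fintype.card ((O → I) × (↥(Set.range ρ)ᶜ → I)) := by
  rw [Fintype.card_prod, Fintype.card_fun, Fintype.card_fun, Fintype.card_fun, ← pow_add,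
    Fintype.card_compl_set, Fintype.card_range,
    Nat.add_sub_cancel' (Fintype.card_le_of_embedding ρ)]

end

theorem dominant_variables_uniform
    {I ι O : Type*} [Fintype I] [Nonempty I] [DecidableEq ι] [Fintype ι]
    [DecidableEq O] [Fintype O]
    (ρ : O ↪ ι) (f : O → (ι → I) → I)
    (h1 : ∀ j j' : O, j' ≠ j → ∀ (v : ι → I) (x : I),
      f j (Function.update v (ρ j') x) = f j v)
    (h2 : ∀ (j : O) (v : ι → I),
      Function.Bijective (fun x : I => f j (Function.update v (ρ j) x))) :
    PMF.map (fun v => fun j : O => f j v) (PMF.uniformOfFintype (ι → I))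
      = PMF.uniformOfFintype (O → I) := by
  classical
  have hbij : Function.Bijective (outputsAndFreeInputs ρ f) :=
    (Fintype.bijective_iff_injective_and_card _).2
      ⟨outputsAndFreeInputs_injective ρ f (dependsOn_insert_compl_range ρ f h1)
        fun j v => (h2 j v).injective, card_fun_eq_card_fun_prod_compl_range ρ⟩
  exact PMF.map_uniformOfFintype_of_card_fiber _ _ (Fintype.card_fiber_fst_of_bijective hbij)
end

section
/- Let I be a finite nonempty type, ι a finite type, i : ι, and f : (ι → I) → I a function that is invertible at coordinate i, i.e. for every v : ι → I the map x ↦ f (Function.update v i x) : I → I is bijective. Then PMF.map f (PMF.uniformOfFintype (ι → I)) = PMF.uniformOfFintype I. -/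
/-!
Restriction to the coordinates other than `i` identifies every fiber `f ⁻¹' {a}` with
`{j // j ≠ i} → I`: invertibility at `i` leaves exactly one admissible value of the `i`-th
coordinate. So all fibers of `f` have the same size, and a map with equinumerous fibers pushes the
uniform distribution forward to the uniform distribution.
-/

open scoped ENNReal

theorem PMF.map_uniformOfFintype_of_fiber_equiv {α β γ : Type*} [Fintype α] [Nonempty α]
    [Fintype β] [Nonempty β] [Fintype γ] (g : α → β) (e : ∀ b, g ⁻¹' {b} ≃ γ) :
    (uniformOfFintype α).map g = uniformOfFintype β := by
  classical
  have hcard : Fintype.card α = Fintype.card β * Fintype.card γ := by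
    rw [← Fintype.card_prod, Fintype.card_congr
      (((Equiv.sigmaPreimageEquiv g).symm.trans (Equiv.sigmaCongrRight e)).trans
        (Equiv.sigmaEquivProd β γ))]
  have hγ : (Fintype.card γ : ℝ≥0∞) ≠ 0 := by
    have := Fintype.card_ne_zero (α := α)
    rw [hcard] at this
    exact_mod_cast right_ne_zero_of_mul this
  ext b
  rw [← toOuterMeasure_apply_singleton, toOuterMeasure_map_apply,
    toOuterMeasure_uniformOfFintype_apply, uniformOfFintype_apply, Fintype.card_congr (e b),
    hcard, Nat.cast_mul, ENNReal.div_eq_inv_mul, ENNReal.mul_inv (by simp) (by simp), mul_assoc,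
    ENNReal.inv_mul_cancel hγ (by simp), mul_one]

theorem bijective_restrict_fiber_of_bijective_update {ι I : Type*} [DecidableEq ι] (i : ι)
    {f : (ι → I) → I}
    (hf : ∀ v : ι → I, Function.Bijective (fun x : I => f (Function.update v i x))) (a : I) :
    Function.Bijective fun v : f ⁻¹' {a} => fun j : {j // j ≠ i} => v.1 j := by
  constructor
  · rintro ⟨v, hv⟩ ⟨w, hw⟩ hvw
    have hoff : ∀ j ≠ i, w j = v j := fun j hj => (congrFun hvw ⟨j, hj⟩).symm
    have hw_eq : w = Function.update v i (w i) := Function.eq_update_iff.2 ⟨rfl, hoff⟩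
    have hi : v i = w i := (hf v).1 <| by
      simp only [Function.update_eq_self]
      rw [← hw_eq]
      exact hv.trans hw.symm
    rw [Subtype.mk.injEq, hw_eq, ← hi, Function.update_eq_self]
  · intro w
    obtain ⟨x, hx⟩ := (hf fun j => if h : j = i then a else w ⟨j, h⟩).2 a
    exact ⟨⟨_, hx⟩, funext fun j => by simp [j.2]⟩

theorem invertible_at_coordinate_uniform
    {I ι : Type*} [Fintype I] [Nonempty I] [DecidableEq ι] [Fintype ι]
    (i : ι) (f : (ι → I) → I)
    (hf : ∀ v : ι → I, Function.Bijective (fun x : I => f (Function.update v i x))) :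
    PMF.map f (PMF.uniformOfFintype (ι → I)) = PMF.uniformOfFintype I :=
  PMF.map_uniformOfFintype_of_fiber_equiv f fun a =>
    Equiv.ofBijective _ (bijective_restrict_fiber_of_bijective_update i hf a)
end

section
/- Let ι be a type, I an additive group, and i : ι. Suppose f : (ι → I) → I is invertible at coordinate i, and g : (ι → I) → I does not depend on coordinate i. Then the functions v ↦ f v + g v and v ↦ g v + f v are invertible at coordinate i. -/
open Function

section

variable {α I : Type*} [AddGroup I] {φ ψ : α → I} {c : I}

theorem Function.Bijective.add_of_eq_const (hφ : Bijective φ) (hψ : ∀ x, ψ x = c) :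
    Bijective fun x => φ x + ψ x := by
  simp only [hψ]
  exact (Equiv.addRight c).bijective.comp hφ

theorem Function.Bijective.const_add_of_eq_const (hφ : Bijective φ) (hψ : ∀ x, ψ x = c) :
    Bijective fun x => ψ x + φ x := by
  simp only [hψ]
  exact (Equiv.addLeft c).bijective.comp hφ

end

theorem invertible_add_indep
    {ι I : Type*} [DecidableEq ι] [AddGroup I] (i : ι)
    (f g : (ι → I) → I)
    (hf : ∀ v : ι → I, Function.Bijective (fun x : I => f (Function.update v i x)))
    (hg : ∀ (v : ι → I) (x : I), g (Function.update v i x) = g v) :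
    (∀ v : ι → I, Function.Bijective
      (fun x : I => f (Function.update v i x) + g (Function.update v i x))) ∧
    (∀ v : ι → I, Function.Bijective
      (fun x : I => g (Function.update v i x) + f (Function.update v i x))) :=
  ⟨fun v => (hf v).add_of_eq_const (hg v), fun v => (hf v).const_add_of_eq_const (hg v)⟩
end

section
/- Let ι be a finite type, I a finite nonempty type, i : ι, and e : (ι → I) → I a function that is invertible at coordinate i, i.e. for every v : ι → I the map x ↦ e (Function.update v i x) : I → I is bijective. Then the map Φ : (ι → I) → (ι → I) defined by Φ v = Function.update v i (e v) is bijective, and consequently PMF.map Φ (PMF.uniformOfFintype (ι → I)) = PMF.uniformOfFintype (ι → I). -/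
/-!
`v ↦ update v i (e v)` leaves the coordinates off `i` alone, so it maps each line
`{update v i x | x}` to itself, where it acts as `x ↦ e (update v i x)`, a bijection by hypothesis.
A bijection between finite types carries the uniform distribution to the uniform distribution.
-/

open Function

theorem Function.bijective_update_self_of_bijective_update {ι : Type*} [DecidableEq ι]
    {β : ι → Type*} (i : ι) (e : (∀ j, β j) → β i)
    (he : ∀ v, Bijective fun x => e (update v i x)) :
    Bijective fun v => update v i (e v) := by
  refine ⟨fun v w h => ?_, fun u => ?_⟩
  · have hv : v = update w i (v i) := by
      simpa only [update_idem, update_eq_self] using congrArg (update · i (v i)) h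
    have hw : w = update w i (w i) := (update_eq_self i w).symm
    have he_eq : e v = e w := by simpa only [update_self] using congrFun h i
    have hi : v i = w i := (he w).1 (by simpa only [← hv, ← hw] using he_eq)
    rw [hv, hi, ← hw]
  · obtain ⟨x, hx⟩ := (he u).2 (u i)
    exact ⟨update u i x, by simp only [hx, update_idem, update_eq_self]⟩

theorem PMF.map_uniformOfFintype_of_bijective {α β : Type*} [Fintype α] [Nonempty α]
    [Fintype β] [Nonempty β] {f : α → β} (hf : Bijective f) :
    (uniformOfFintype α).map f = uniformOfFintype β := by
  ext b
  obtain ⟨a, rfl⟩ := hf.2 b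
  rw [map_apply, tsum_eq_single a fun a' ha' => if_neg (hf.1.ne ha').symm]
  simp [uniformOfFintype_apply, Fintype.card_of_bijective hf]

theorem simply_dom_sound
    {ι I : Type*} [DecidableEq ι] [Fintype ι] [Fintype I] [Nonempty I]
    (i : ι) (e : (ι → I) → I)
    (he : ∀ v : ι → I, Function.Bijective (fun x : I => e (Function.update v i x))) :
    Function.Bijective (fun v : ι → I => Function.update v i (e v)) ∧
    PMF.map (fun v : ι → I => Function.update v i (e v)) (PMF.uniformOfFintype (ι → I))
      = PMF.uniformOfFintype (ι → I) :=
  have hΦ := bijective_update_self_of_bijective_update i e he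
  ⟨hΦ, PMF.map_uniformOfFintype_of_bijective hΦ⟩
end

section
/- Let ι be a finite type, I a finite nonempty additive commutative group, i j : ι with i ≠ j, and F : (ι → I) → C a function that depends on coordinates i and j only through their sum: whenever v w : ι → I satisfy v i + v j = w i + w j and v x = w x for all x with x ≠ i and x ≠ j, then F v = F w. Then PMF.map F (PMF.uniformOfFintype (ι → I)) = PMF.map (fun v => F (Function.update v i 0)) (PMF.uniformOfFintype (ι → I)). -/
/-!
Adding the `i`-th coordinate to the `j`-th one is a bijection of `ι → I`, so it preserves the
uniform distribution. Composing it with `v ↦ update v i 0` leaves every coordinate other than `i`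
and `j` unchanged and keeps the sum of the `i`-th and `j`-th ones, hence does not change `F`.
-/

theorem PMF.map_equiv_uniformOfFintype {α β : Type*} [Fintype α] [Nonempty α] [Fintype β]
    [Nonempty β] (e : α ≃ β) : (uniformOfFintype α).map e = uniformOfFintype β := by
  classical
  ext b
  rw [map_apply, ← e.symm.tsum_eq]
  simp [Fintype.card_congr e]

namespace Equiv

variable {ι I : Type*} [DecidableEq ι] [AddGroup I]

def piShear (i j : ι) (hij : i ≠ j) : (ι → I) ≃ (ι → I) where
  toFun v := Function.update v j (v i + v j)
  invFun v := Function.update v j (-v i + v j)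
  left_inv v := by
    ext x
    rcases eq_or_ne x j with rfl | hx <;> simp [*]
  right_inv v := by
    ext x
    rcases eq_or_ne x j with rfl | hx <;> simp [*]

variable {i j : ι} {hij : i ≠ j}

@[simp]
theorem piShear_apply_self (v : ι → I) : piShear i j hij v j = v i + v j := by
  simp [piShear]

@[simp]
theorem piShear_apply_of_ne (v : ι → I) {x : ι} (hx : x ≠ j) : piShear i j hij v x = v x := by
  simp [piShear, hx]

end Equiv

theorem simply_col_sound
    {ι I C : Type*} [DecidableEq ι] [Fintype ι] [Fintype I] [Nonempty I] [AddCommGroup I]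
    (i j : ι) (hij : i ≠ j) (F : (ι → I) → C)
    (hF : ∀ v w : ι → I, v i + v j = w i + w j →
      (∀ x : ι, x ≠ i → x ≠ j → v x = w x) → F v = F w) :
    PMF.map F (PMF.uniformOfFintype (ι → I))
      = PMF.map (fun v => F (Function.update v i 0)) (PMF.uniformOfFintype (ι → I)) := by
  set e := Equiv.piShear (I := I) i j hij
  have hF_shear : F = (fun v => F (Function.update v i 0)) ∘ e := by
    funext v
    apply hF
    · simp [e, Function.update_of_ne hij.symm]
    · intro x hxi hxj
      simp [e, hxi, hxj]
  conv_lhs => rw [hF_shear, ← PMF.map_comp, PMF.map_equiv_uniformOfFintype]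
end

section
/- Let I be a finite nonempty type, ι a finite type indexing the random variables, K a type of secret inputs, α a type, O₂ a finite type, and ρ : O₂ ↪ ι an injection. Let F : K → (ι → I) → α and g : O₂ → K → (ι → I) → I satisfy: (i) for every k : K and j : O₂, F k does not depend on coordinate ρ j; (ii) for every k : K and j j' : O₂ with j' ≠ j, g j k does not depend on coordinate ρ j'; (iii) for every k : K and j : O₂, g j k is invertible at coordinate ρ j; and (iv) F is statistically independent of the secret, i.e. for all k₁ k₂ : K, PMF.map (F k₁) (PMF.uniformOfFintype (ι → I)) = PMF.map (F k₂) (PMF.uniformOfFintype (ι → I)). Then the joint family is statistically independent of the secret: for all k₁ k₂ : K, PMF.map (fun v => (F k₁ v, fun j : O₂ => g j k₁ v)) (PMF.uniformOfFintype (ι → I)) = PMF.map (fun v => (F k₂ v, fun j : O₂ => g j k₂ v)) (PMF.uniformOfFintype (ι → I)). -/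
/-!
Overwriting each coordinate `ρ j` of the random input `v` by `g j k v` is injective, hence a
bijection of the finite input space: `ρ j` can be recovered from `g j k v`, because `g j k` is
invertible at `ρ j` and ignores the other overwritten coordinates. This bijection preserves the
uniform distribution, leaves `F k` unchanged and turns `g · k` into the restriction `v ∘ ρ`.
Since `F k` ignores the coordinates in `range ρ`, the restriction `v ∘ ρ` is uniform and
independent of `F k v`, so the joint law is the law of `F k` times a uniform distribution, which
does not depend on `k`.
-/

namespace PMF

variable {α β : Type*} [Fintype α] [Nonempty α] [Fintype β] [Nonempty β]

theorem map_uniformOfFintype_of_bijective_s15 {e : α → β} (he : Function.Bijective e) :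
    (uniformOfFintype α).map e = uniformOfFintype β := by
  classical
  ext b
  obtain ⟨a, rfl⟩ := he.surjective b
  simp [map_apply, he.injective.eq_iff, Fintype.card_of_bijective he]

theorem uniformOfFintype_prod :
    uniformOfFintype (α × β) =
      (uniformOfFintype α).bind fun a => (uniformOfFintype β).map (Prod.mk a) := by
  classical
  ext ⟨a, b⟩
  simp [bind_apply, map_apply, ENNReal.mul_inv, ite_and]

theorem map_fst_uniformOfFintype :
    (uniformOfFintype (α × β)).map Prod.fst = uniformOfFintype α := by
  simp only [uniformOfFintype_prod, map_bind, map_comp]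
  exact (congrArg _ (funext fun _ => map_const _ _)).trans (bind_pure _)

theorem map_prodMap_id_uniformOfFintype {γ : Type*} (f : α → γ) :
    (uniformOfFintype (α × β)).map (Prod.map f id) =
      ((uniformOfFintype α).map f).bind fun c => (uniformOfFintype β).map (Prod.mk c) := by
  simp only [uniformOfFintype_prod, map_bind, map_comp, bind_map]
  rfl

end PMF

open Function PMF

theorem dependsOn_compl_of_update_eq {ι I α : Type*} [DecidableEq ι] {f : (ι → I) → α}
    (s : Finset ι) (hf : ∀ i ∈ s, ∀ v x, f (update v i x) = f v) : DependsOn f (↑s)ᶜ := by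
  induction s using Finset.induction_on with
  | empty => exact fun v w h => congrArg f (funext fun i => h i (by simp))
  | insert i s _ ih =>
    intro v w hvw
    calc f v = f (update w i (v i)) := by
          refine ih (fun i' hi' => hf i' (Finset.mem_insert_of_mem hi')) fun i' hi' => ?_
          rcases eq_or_ne i' i with rfl | hne
          · simp
          · rw [update_of_ne hne]
            exact hvw i' (by simp_all)
      _ = f w := hf i (Finset.mem_insert_self i s) w (v i)

section Embedding

variable {ι I O : Type*} [DecidableEq ι] (ρ : O ↪ ι)

theorem injective_extend_of_injective_update [Fintype O] {G : O → (ι → I) → I}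
    (hG : ∀ j j', j' ≠ j → ∀ v x, G j (update v (ρ j') x) = G j v)
    (hinj : ∀ j v, Injective fun x => G j (update v (ρ j) x)) :
    Injective fun v => extend ρ (fun j => G j v) v := by
  classical
  intro v w hvw
  have hoff : ∀ i ∉ Set.range ρ, v i = w i := fun i hi => by
    simpa [extend_apply' _ _ _ hi] using congrFun hvw i
  have hG_eq : ∀ j, G j v = G j w := fun j => by
    simpa [ρ.injective.extend_apply] using congrFun hvw (ρ j)
  funext i
  by_cases hi : i ∈ Set.range ρ
  swap
  · exact hoff i hi
  obtain ⟨j, rfl⟩ := hi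
  have hdep : DependsOn (G j) (↑((Finset.univ.erase j).map ρ))ᶜ :=
    dependsOn_compl_of_update_eq ((Finset.univ.erase j).map ρ) fun i hi => by
      obtain ⟨j', hj', rfl⟩ := Finset.mem_map.mp hi
      exact hG j j' (Finset.ne_of_mem_erase hj')
  have hswap : G j (update v (ρ j) (w (ρ j))) = G j w := hdep fun i hi => by
    rcases eq_or_ne i (ρ j) with rfl | hij
    · simp
    · rw [update_of_ne hij]
      refine hoff i ?_
      rintro ⟨j', rfl⟩
      exact hi (Finset.mem_map_of_mem ρ
        (Finset.mem_erase.mpr ⟨fun h => hij (h ▸ rfl), Finset.mem_univ _⟩))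
  exact hinj j v (by simp only [update_eq_self]; rw [hswap, hG_eq])

theorem map_uniformOfFintype_prodMk_comp_of_dependsOn [Fintype ι] [Fintype I] [Nonempty I]
    [Fintype O] [DecidableEq O] {α : Type*} {f : (ι → I) → α} (hf : DependsOn f (Set.range ρ)ᶜ) :
    (uniformOfFintype (ι → I)).map (fun w => (f w, w ∘ ρ)) =
      ((uniformOfFintype (ι → I)).map f).bind
        fun a => (uniformOfFintype (O → I)).map (Prod.mk a) := by
  -- `Φ` swaps the coordinates of `p.1` along `ρ` with `p.2`.
  set Φ : (ι → I) × (O → I) → (ι → I) × (O → I) := fun p => (extend ρ p.2 p.1, p.1 ∘ ρ)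
  have hΦ : Involutive Φ := fun p => by
    refine Prod.ext (funext fun i => ?_) (extend_comp ρ.injective _ _)
    by_cases hi : i ∈ Set.range ρ
    · obtain ⟨j, rfl⟩ := hi
      simp [Φ, ρ.injective.extend_apply]
    · simp [Φ, extend_apply' _ _ _ hi]
  calc (uniformOfFintype (ι → I)).map (fun w => (f w, w ∘ ρ))
      = (uniformOfFintype ((ι → I) × (O → I))).map (Prod.map f id ∘ Φ) := by
        rw [← map_fst_uniformOfFintype (β := O → I), map_comp]
        congr 1
        funext p
        exact Prod.ext (hf fun i hi => (extend_apply' _ _ _ hi).symm) rfl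
    _ = _ := by
        rw [← map_comp, map_uniformOfFintype_of_bijective_s15 hΦ.bijective,
          map_prodMap_id_uniformOfFintype]

theorem map_uniformOfFintype_prodMk_eq_bind [Fintype ι] [Fintype I] [Nonempty I] [Fintype O]
    [DecidableEq O] {α : Type*} {f : (ι → I) → α} {G : O → (ι → I) → I}
    (hf : DependsOn f (Set.range ρ)ᶜ)
    (hG : ∀ j j', j' ≠ j → ∀ v x, G j (update v (ρ j') x) = G j v)
    (hbij : ∀ j v, Bijective fun x => G j (update v (ρ j) x)) :
    (uniformOfFintype (ι → I)).map (fun v => (f v, fun j => G j v)) =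
      ((uniformOfFintype (ι → I)).map f).bind
        fun a => (uniformOfFintype (O → I)).map (Prod.mk a) := by
  have hΨ : Bijective fun v => extend ρ (fun j => G j v) v :=
    Finite.injective_iff_bijective.mp
      (injective_extend_of_injective_update ρ hG fun j v => (hbij j v).injective)
  rw [← map_uniformOfFintype_prodMk_comp_of_dependsOn ρ hf]
  conv_rhs => rw [← map_uniformOfFintype_of_bijective_s15 hΨ, map_comp]
  congr 1
  funext v
  exact Prod.ext (hf fun i hi => (extend_apply' _ _ _ hi).symm)
    (extend_comp ρ.injective _ _).symm

end Embedding

theorem sid3_sound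
    {I ι K α O₂ : Type*} [Fintype I] [Nonempty I] [DecidableEq ι] [Fintype ι] [Fintype O₂]
    (ρ : O₂ ↪ ι)
    (F : K → (ι → I) → α) (g : O₂ → K → (ι → I) → I)
    (h1 : ∀ (k : K) (j : O₂) (v : ι → I) (x : I), F k (Function.update v (ρ j) x) = F k v)
    (h2 : ∀ (k : K) (j j' : O₂), j' ≠ j → ∀ (v : ι → I) (x : I),
      g j k (Function.update v (ρ j') x) = g j k v)
    (h3 : ∀ (k : K) (j : O₂) (v : ι → I),
      Function.Bijective (fun x : I => g j k (Function.update v (ρ j) x)))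
    (h4 : ∀ k₁ k₂ : K, PMF.map (F k₁) (PMF.uniformOfFintype (ι → I))
      = PMF.map (F k₂) (PMF.uniformOfFintype (ι → I)))
    (k₁ k₂ : K) :
    PMF.map (fun v => (F k₁ v, fun j : O₂ => g j k₁ v)) (PMF.uniformOfFintype (ι → I))
      = PMF.map (fun v => (F k₂ v, fun j : O₂ => g j k₂ v)) (PMF.uniformOfFintype (ι → I)) := by
  classical
  have hF : ∀ k, DependsOn (F k) (Set.range ρ)ᶜ := fun k => by
    simpa using dependsOn_compl_of_update_eq (Finset.univ.map ρ) fun i hi => by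
      obtain ⟨j, -, rfl⟩ := Finset.mem_map.mp hi
      exact h1 k j
  rw [map_uniformOfFintype_prodMk_eq_bind ρ (hF k₁) (h2 k₁) (h3 k₁),
    map_uniformOfFintype_prodMk_eq_bind ρ (hF k₂) (h2 k₂) (h3 k₂), h4 k₁ k₂]
end

section
/- Let K be a type, R₁ and R₂ finite nonempty types, C₁ and C₂ types, and F₁ : K → R₁ → C₁ and F₂ : K → R₂ → C₂ two families each statistically independent of the secret, i.e. for all k₁ k₂ : K, PMF.map (F₁ k₁) (PMF.uniformOfFintype R₁) = PMF.map (F₁ k₂) (PMF.uniformOfFintype R₁), and likewise for F₂. Then the joint family on the product of random inputs is statistically independent of the secret: for all k₁ k₂ : K, PMF.map (fun r : R₁ × R₂ => (F₁ k₁ r.1, F₂ k₁ r.2)) (PMF.uniformOfFintype (R₁ × R₂)) = PMF.map (fun r : R₁ × R₂ => (F₁ k₂ r.1, F₂ k₂ r.2)) (PMF.uniformOfFintype (R₁ × R₂)). -/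
/-!
The uniform distribution on `R₁ × R₂` is the independent product of the uniform distributions
on the factors, and pushing an independent product forward along `Prod.map f₁ f₂` gives the
independent product of the pushforwards. So the joint distribution for a secret `k` is the
product of the two marginal distributions, neither of which depends on `k`.
-/

namespace PMF

variable {α β γ δ : Type*}

/-- The distribution of a pair of independent samples from `p` and `q`. -/
noncomputable def prod (p : PMF α) (q : PMF β) : PMF (α × β) :=
  p.bind fun a => q.map (Prod.mk a)

theorem prod_apply (p : PMF α) (q : PMF β) (a : α) (b : β) : p.prod q (a, b) = p a * q b := by
  rw [prod, bind_apply, tsum_eq_single a fun a' ha' => by simp [map_apply, Ne.symm ha'],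
    map_apply, tsum_eq_single b fun b' hb' => by simp [Ne.symm hb']]
  simp

theorem map_prodMap_prod (p : PMF α) (q : PMF β) (f : α → γ) (g : β → δ) :
    (p.prod q).map (Prod.map f g) = (p.map f).prod (q.map g) := by
  simp only [prod, map_bind, bind_map, map_comp]
  rfl

theorem uniformOfFintype_prod_s17 [Fintype α] [Nonempty α] [Fintype β] [Nonempty β] :
    uniformOfFintype (α × β) = (uniformOfFintype α).prod (uniformOfFintype β) := by
  ext ⟨a, b⟩
  simp [prod_apply, uniformOfFintype_apply, ENNReal.mul_inv]

end PMF

theorem sid5_sound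
    {K R₁ R₂ C₁ C₂ : Type*} [Fintype R₁] [Nonempty R₁] [Fintype R₂] [Nonempty R₂]
    (F₁ : K → R₁ → C₁) (F₂ : K → R₂ → C₂)
    (h₁ : ∀ k₁ k₂ : K,
      PMF.map (F₁ k₁) (PMF.uniformOfFintype R₁) = PMF.map (F₁ k₂) (PMF.uniformOfFintype R₁))
    (h₂ : ∀ k₁ k₂ : K,
      PMF.map (F₂ k₁) (PMF.uniformOfFintype R₂) = PMF.map (F₂ k₂) (PMF.uniformOfFintype R₂))
    (k₁ k₂ : K) :
    PMF.map (fun r : R₁ × R₂ => (F₁ k₁ r.1, F₂ k₁ r.2)) (PMF.uniformOfFintype (R₁ × R₂))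
      = PMF.map (fun r : R₁ × R₂ => (F₁ k₂ r.1, F₂ k₂ r.2)) (PMF.uniformOfFintype (R₁ × R₂)) := by
  have joint_eq_prod : ∀ k, PMF.map (fun r : R₁ × R₂ => (F₁ k r.1, F₂ k r.2))
      (PMF.uniformOfFintype (R₁ × R₂)) =
        ((PMF.uniformOfFintype R₁).map (F₁ k)).prod ((PMF.uniformOfFintype R₂).map (F₂ k)) :=
    fun k => by rw [PMF.uniformOfFintype_prod_s17]; exact PMF.map_prodMap_prod _ _ _ _
  rw [joint_eq_prod, joint_eq_prod, h₁ k₁ k₂, h₂ k₁ k₂]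
end
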